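/- Let ν ≥ 1, let κ ∈ ℝ, and let A be a Hermitian ν×ν complex matrix for which there exists a partition of the index set {1,…,ν} into two disjoint sets S₁ and S₂ such that A_{jk} = 0 whenever j and k both lie in S₁ or both lie in S₂. Set Δ = κ·I − A. Then λ_n(Δ) + λ_{ν+1−n}(Δ) = 2κ for every n ∈ {1,…,ν}; in particular, if ν is odd then κ is an eigenvalue of Δ. -/

import Mathlib

open Matrix Polynomial

/-- Characteristic polynomial is invariant under conjugation. -/
lemma charpoly_conj_aux {ν : ℕ} (P Q M : Matrix (Fin ν) (Fin ν) ℂ)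
    (h1 : P * Q = 1) : (P * M * Q).charpoly = M.charpoly := by
  have hcomm : P.map ⇑C * Matrix.diagonal (fun _ : Fin ν => (X : ℂ[X])) =
      Matrix.diagonal (fun _ : Fin ν => (X : ℂ[X])) * P.map ⇑C := by
    ext i j
    rw [Matrix.mul_diagonal, Matrix.diagonal_mul, mul_comm]
  have key : charmatrix (P * M * Q) =
      (P.map C) * charmatrix M * (Q.map C) := by
    unfold charmatrix
    rw [mul_sub, sub_mul]
    congr 1
    · rw [Matrix.scalar_apply, hcomm, mul_assoc, ← Matrix.map_mul, h1]
      simp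
    · simp only [RingHom.mapMatrix_apply]
      rw [← Matrix.map_mul, ← Matrix.map_mul]
  have h2 : (P.map ⇑C).det * (Q.map ⇑C).det = 1 := by
    rw [← Matrix.det_mul, ← Matrix.map_mul, h1]
    simp
  unfold Matrix.charpoly
  rw [key, Matrix.det_mul, Matrix.det_mul,
    show (P.map ⇑C).det * (charmatrix M).det * (Q.map ⇑C).det =
      (P.map ⇑C).det * (Q.map ⇑C).det * (charmatrix M).det from by ring, h2, one_mul]

lemma charpoly_diagonal_fin {ν : ℕ} (d : Fin ν → ℂ) :
    (Matrix.diagonal d).charpoly = ∏ i, (X - C (d i)) := by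
  have : charmatrix (Matrix.diagonal d) = Matrix.diagonal fun i => X - C (d i) := by
    ext i j
    by_cases h : i = j
    · subst h; simp [charmatrix_apply_eq]
    · rw [charmatrix_apply_ne _ _ _ h, Matrix.diagonal_apply_ne _ h,
        Matrix.diagonal_apply_ne _ h]
      simp
  rw [Matrix.charpoly, this, Matrix.det_diagonal]

lemma monotone_eq_of_multiset_eq {ν : ℕ} {f g : Fin ν → ℝ} (hf : Monotone f) (hg : Monotone g)
    (h : Multiset.map f Finset.univ.val = Multiset.map g Finset.univ.val) : f = g := by
  rw [Fin.univ_val_map, Fin.univ_val_map, Multiset.coe_eq_coe] at h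
  exact List.ofFn_injective (List.Perm.eq_of_sortedLE hf.sortedLE_ofFn hg.sortedLE_ofFn h)

/-- The eigenvalues of a Hermitian matrix, listed in increasing order
(counted with multiplicity). -/
noncomputable def eigs {ν : ℕ} {A : Matrix (Fin ν) (Fin ν) ℂ} (hA : A.IsHermitian) :
    Fin ν → ℝ :=
  hA.eigenvalues ∘ ⇑(Tuple.sort hA.eigenvalues)

lemma herm_diag_sub {ν : ℕ} (v : Fin ν → ℝ) {M : Matrix (Fin ν) (Fin ν) ℂ}
    (hM : M.IsHermitian) :
    ((Matrix.diagonal fun j => (v j : ℂ)) - M).IsHermitian :=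
  (Matrix.isHermitian_diagonal_of_self_adjoint _
    (by funext n; exact Complex.conj_ofReal (v n))).sub hM

/-- if the Hermitian matrix `A` is "bipartite" with respect to a
partition `S₁ ⊔ S₂` of the index set, and `Δ = κ·I − A`, then the spectrum of `Δ`
is symmetric about `κ`: `λₙ(Δ) + λ_{ν+1−n}(Δ) = 2κ`; in particular if `ν` is odd
then `κ` is an eigenvalue of `Δ`. -/
theorem bipartite_symmetry (ν : ℕ) (hν : 1 ≤ ν) (κ : ℝ)
    (A : Matrix (Fin ν) (Fin ν) ℂ) (hA : A.IsHermitian)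
    (S₁ S₂ : Finset (Fin ν)) (hdisj : Disjoint S₁ S₂) (hunion : S₁ ∪ S₂ = Finset.univ)
    (hbip : ∀ j k : Fin ν, (j ∈ S₁ ∧ k ∈ S₁) ∨ (j ∈ S₂ ∧ k ∈ S₂) → A j k = 0) :
    (∀ n : Fin ν,
        eigs (herm_diag_sub (fun _ => κ) hA) n +
          eigs (herm_diag_sub (fun _ => κ) hA) ⟨ν - 1 - (n : ℕ), by omega⟩ = 2 * κ) ∧
    (Odd ν →
      ((Matrix.diagonal fun _ : Fin ν => (κ : ℂ)) - A -
          (κ : ℂ) • (1 : Matrix (Fin ν) (Fin ν) ℂ)).det = 0) := by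
  classical
  -- the sign matrix
  set d : Fin ν → ℂ := fun j => if j ∈ S₁ then 1 else -1 with hd
  set D : Matrix (Fin ν) (Fin ν) ℂ := Matrix.diagonal d with hDdef
  have hdd : ∀ j, d j * d j = 1 := by
    intro j; by_cases h : j ∈ S₁ <;> simp [hd, h]
  have hS : ∀ j : Fin ν, j ∉ S₁ → j ∈ S₂ := by
    intro j hj
    have := Finset.mem_univ j
    rw [← hunion, Finset.mem_union] at this
    tauto
  have hDD : D * D = 1 := by
    rw [hDdef, Matrix.diagonal_mul_diagonal]
    rw [show (fun i => d i * d i) = fun _ => (1 : ℂ) from funext hdd]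
    simp
  have hDAD : D * A * D = -A := by
    ext j k
    rw [Matrix.mul_diagonal, Matrix.diagonal_mul]
    by_cases hj : j ∈ S₁ <;> by_cases hk : k ∈ S₁
    · simp [Matrix.neg_apply, hbip j k (Or.inl ⟨hj, hk⟩)]
    · simp [Matrix.neg_apply, hd, hj, hk]
    · simp [Matrix.neg_apply, hd, hj, hk]
    · simp [Matrix.neg_apply, hbip j k (Or.inr ⟨hS j hj, hS k hk⟩)]
  -- the Laplacian
  set Δ : Matrix (Fin ν) (Fin ν) ℂ := (Matrix.diagonal fun _ => (κ : ℂ)) - A with hΔdef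
  have hΔ : Δ.IsHermitian := herm_diag_sub (fun _ => κ) hA
  set lam : Fin ν → ℝ := hΔ.eigenvalues with hlam
  -- conjugating Δ by D
  have hdiagκ : Matrix.diagonal (fun _ : Fin ν => (κ : ℂ)) = (κ : ℂ) • 1 := by
    rw [Matrix.smul_one_eq_diagonal]
  have hDΔD : D * Δ * D = (Matrix.diagonal fun _ : Fin ν => ((2 * κ : ℝ) : ℂ)) - Δ := by
    rw [hΔdef, mul_sub, sub_mul, hDAD, hdiagκ]
    rw [show D * ((κ : ℂ) • 1) * D = (κ : ℂ) • (D * D) by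
      rw [Matrix.mul_smul, Matrix.smul_mul, mul_one]]
    rw [hDD]
    rw [show ((2 * κ : ℝ) : ℂ) = 2 * (κ : ℂ) by push_cast; ring]
    rw [show Matrix.diagonal (fun _ : Fin ν => 2 * (κ : ℂ)) = (2 * (κ : ℂ)) • 1 by
      rw [Matrix.smul_one_eq_diagonal]]
    module
  -- Δ' and its decomposition
  set U : Matrix (Fin ν) (Fin ν) ℂ := (hΔ.eigenvectorUnitary : Matrix (Fin ν) (Fin ν) ℂ)
    with hUdef
  have hU1 : U * star U = 1 := hΔ.eigenvectorUnitary.2.2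
  have hspec : Δ = U * Matrix.diagonal (fun i => ((lam i : ℝ) : ℂ)) * star U := by
    have h := hΔ.spectral_theorem
    rw [Unitary.conjStarAlgAut_apply] at h
    convert h using 3
    all_goals rfl
  have hdec : (Matrix.diagonal fun _ : Fin ν => ((2 * κ : ℝ) : ℂ)) - Δ =
      U * Matrix.diagonal (fun i => ((2 * κ - lam i : ℝ) : ℂ)) * star U := by
    have h2 : Matrix.diagonal (fun i : Fin ν => ((2 * κ - lam i : ℝ) : ℂ)) =
        Matrix.diagonal (fun _ : Fin ν => ((2 * κ : ℝ) : ℂ)) -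
          Matrix.diagonal (fun i => ((lam i : ℝ) : ℂ)) := by
      rw [Matrix.diagonal_sub]
      congr 1
      funext i
      push_cast
      ring
    rw [h2, mul_sub, sub_mul, ← hspec]
    congr 1
    rw [show Matrix.diagonal (fun _ : Fin ν => ((2 * κ : ℝ) : ℂ)) = ((2 * κ : ℝ) : ℂ) • 1 from
      (Matrix.smul_one_eq_diagonal _).symm]
    rw [Matrix.mul_smul, Matrix.smul_mul, mul_one, hU1]
  -- charpoly computations
  have hc1 : Δ.charpoly = ∏ i, (X - C ((lam i : ℝ) : ℂ)) := by
    rw [hspec, charpoly_conj_aux _ _ _ hU1, charpoly_diagonal_fin]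
  have hc2 : ((Matrix.diagonal fun _ : Fin ν => ((2 * κ : ℝ) : ℂ)) - Δ).charpoly =
      ∏ i, (X - C ((2 * κ - lam i : ℝ) : ℂ)) := by
    rw [hdec, charpoly_conj_aux _ _ _ hU1, charpoly_diagonal_fin]
  have hc3 : ((Matrix.diagonal fun _ : Fin ν => ((2 * κ : ℝ) : ℂ)) - Δ).charpoly =
      Δ.charpoly := by
    rw [← hDΔD]
    exact charpoly_conj_aux D D Δ hDD
  -- multiset equality over ℂ
  have hroots : (Finset.univ.val.map fun i : Fin ν => ((2 * κ - lam i : ℝ) : ℂ)) =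
      Finset.univ.val.map fun i : Fin ν => ((lam i : ℝ) : ℂ) := by
    have key : (Multiset.map (fun a : ℂ => X - C a)
          (Finset.univ.val.map fun i : Fin ν => ((2 * κ - lam i : ℝ) : ℂ))).prod =
        (Multiset.map (fun a : ℂ => X - C a)
          (Finset.univ.val.map fun i : Fin ν => ((lam i : ℝ) : ℂ))).prod := by
      rw [Multiset.map_map, Multiset.map_map]
      simp only [Function.comp]
      rw [← Finset.prod_eq_multiset_prod, ← Finset.prod_eq_multiset_prod]
      exact hc2 ▸ hc1 ▸ hc3
    rw [← Polynomial.roots_multiset_prod_X_sub_C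
        (Finset.univ.val.map fun i : Fin ν => ((2 * κ - lam i : ℝ) : ℂ)),
      ← Polynomial.roots_multiset_prod_X_sub_C
        (Finset.univ.val.map fun i : Fin ν => ((lam i : ℝ) : ℂ)), key]
  -- multiset equality over ℝ
  have hrootsR : (Finset.univ.val.map fun i : Fin ν => 2 * κ - lam i) =
      Finset.univ.val.map lam := by
    have hinj : Function.Injective (Complex.ofReal) := Complex.ofReal_injective
    apply Multiset.map_injective hinj
    rw [Multiset.map_map, Multiset.map_map]
    exact hroots
  -- sorted eigenvalues
  set s : Fin ν → ℝ := eigs hΔ with hs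
  have hmono : Monotone s := Tuple.monotone_sort lam
  have hms : Finset.univ.val.map s = Finset.univ.val.map lam := by
    rw [hs]
    show Finset.univ.val.map (lam ∘ ⇑(Tuple.sort lam)) = _
    rw [← Multiset.map_map]
    congr 1
    have := Finset.map_univ_equiv (Tuple.sort lam : Equiv.Perm (Fin ν))
    calc Finset.univ.val.map ⇑(Tuple.sort lam)
        = (Finset.univ.map (Tuple.sort lam).toEmbedding).val := by
          rw [Finset.map_val]; rfl
      _ = Finset.univ.val := by rw [this]
  set g : Fin ν → ℝ := fun n => 2 * κ - s n.rev with hg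
  have hrevmk : ∀ n : Fin ν, (⟨ν - 1 - (n : ℕ), by omega⟩ : Fin ν) = n.rev := by
    intro n
    ext
    simp [Fin.val_rev]
    omega
  have hgmono : Monotone g := by
    intro a b hab
    rw [hg]
    simp only
    have : b.rev ≤ a.rev := by
      rw [Fin.le_def] at *
      simp [Fin.val_rev]
      omega
    have := hmono this
    linarith
  have hmg : Finset.univ.val.map g = Finset.univ.val.map s := by
    rw [hg]
    show Finset.univ.val.map ((fun x => 2 * κ - s x) ∘ Fin.rev) = _
    rw [← Multiset.map_map]
    have hrev : Finset.univ.val.map (Fin.rev : Fin ν → Fin ν) = Finset.univ.val := by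
      have := Finset.map_univ_equiv (Fin.revPerm : Equiv.Perm (Fin ν))
      calc Finset.univ.val.map (Fin.rev : Fin ν → Fin ν)
          = (Finset.univ.map (Fin.revPerm : Equiv.Perm (Fin ν)).toEmbedding).val := by
            rw [Finset.map_val]; rfl
        _ = Finset.univ.val := by rw [this]
    rw [hrev]
    have h1 : Finset.univ.val.map (fun x => 2 * κ - s x) =
        (Finset.univ.val.map s).map (fun x => 2 * κ - x) := by
      rw [Multiset.map_map]; rfl
    have h2 : Finset.univ.val.map (fun i : Fin ν => 2 * κ - lam i) =
        (Finset.univ.val.map lam).map (fun x => 2 * κ - x) := by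
      rw [Multiset.map_map]; rfl
    rw [h1, hms, ← h2, hrootsR]
  have hseq : s = g := monotone_eq_of_multiset_eq hmono hgmono (hmg.symm)
  constructor
  · intro n
    have := congrFun hseq n
    rw [hg] at this
    simp only at this
    rw [hrevmk n]
    show s n + s n.rev = 2 * κ
    linarith
  · intro hodd
    have hmat : (Matrix.diagonal fun _ : Fin ν => (κ : ℂ)) - A -
        (κ : ℂ) • (1 : Matrix (Fin ν) (Fin ν) ℂ) = -A := by
      rw [hdiagκ]; abel
    rw [hmat]
    have hdetD : D.det * D.det = 1 := by
      rw [← Matrix.det_mul, hDD, Matrix.det_one]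
    have h1 : A.det = (D * A * D).det := by
      rw [Matrix.det_mul, Matrix.det_mul]
      rw [mul_comm, ← mul_assoc, hdetD, one_mul]
    rw [hDAD, Matrix.det_neg, Fintype.card_fin, Odd.neg_one_pow hodd] at h1
    have h0 : A.det = 0 := by linear_combination ((1 : ℂ)/2) * h1
    rw [Matrix.det_neg, h0, mul_zero]
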